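/- The unital C*-algebra generated by the weakly monotone position operators {X_i = A_i + A_i† : i ∈ ℤ} acts irreducibly on the weakly monotone Fock space F_wm(ℓ²(ℤ)); equivalently, its commutant is ℂ·I. -/

import Mathlib

open scoped ComplexOrder

/-- Index set for the orthonormal basis of the weakly monotone Fock space over `ℓ²(ℤ)`:
decreasing (finite) lists of integers; the empty list corresponds to the vacuum. -/
def WMIdx : Type := {l : List ℤ // l.Chain' (· ≥ ·)}

/-- `i` may be created on top of the tensor indexed by `l`. -/
def WMIdx.ok (i : ℤ) (l : WMIdx) : Prop := ∀ j ∈ l.1.head?, i ≥ j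

def WMIdx.cons (i : ℤ) (l : WMIdx) (h : WMIdx.ok i l) : WMIdx :=
  ⟨i :: l.1, List.isChain_cons.mpr ⟨h, l.2⟩⟩

def WMIdx.vac : WMIdx := ⟨[], List.isChain_nil⟩

/-!
Let `T` commute with every `X_i`. Since `X_i² Ω = e_i ⊗ e_i + Ω` while `X_i` kills every basis
vector whose first letter exceeds `i`, the coefficient of `T Ω` along a basis vector `e ≠ Ω` equals
minus the coefficient of `T (e_i ⊗ e_i)` along `e` for all `i` small enough. The latter is
`⟪T* e, e_i ⊗ e_i⟫`, which tends to `0` as `i → -∞` by Bessel's inequality, so `Ω` is an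
eigenvector of `T`. As `e_i ⊗ ξ = X_i ξ - A_i ξ` and `A_i` sends basis vectors to basis vectors
or to `0`, induction on the length of words puts every basis vector in that eigenspace.
-/

open scoped InnerProductSpace
open Filter Topology

theorem Orthonormal.tendsto_inner_cofinite_zero {ι 𝕜 E : Type*} [RCLike 𝕜]
    [NormedAddCommGroup E] [InnerProductSpace 𝕜 E] {v : ι → E} (hv : Orthonormal 𝕜 v) (x : E) :
    Tendsto (fun i => ⟪x, v i⟫_𝕜) cofinite (𝓝 0) := by
  rw [tendsto_zero_iff_norm_tendsto_zero]
  have hsq := (hv.inner_products_summable x).tendsto_cofinite_zero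
  have hsqrt := (Real.continuous_sqrt.tendsto 0).comp hsq
  rw [Real.sqrt_zero] at hsqrt
  refine hsqrt.congr fun i => ?_
  simp only [Function.comp_apply, Real.sqrt_sq (norm_nonneg _), norm_inner_symm]

namespace HilbertBasis

variable {ι 𝕜 E F : Type*} [RCLike 𝕜] [NormedAddCommGroup E] [InnerProductSpace 𝕜 E]

protected theorem ext_inner_left (b : HilbertBasis ι 𝕜 E) {x y : E}
    (h : ∀ i, ⟪b i, x⟫_𝕜 = ⟪b i, y⟫_𝕜) : x = y :=
  b.repr.injective <| lp.ext <| funext fun i => by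
    rw [b.repr_apply_apply, b.repr_apply_apply, h]

protected theorem ext_continuousLinearMap [NormedAddCommGroup F] [NormedSpace 𝕜 F]
    (b : HilbertBasis ι 𝕜 E) {f g : E →L[𝕜] F} (h : ∀ i, f (b i) = g (b i)) : f = g :=
  ContinuousLinearMap.ext_on
    (Submodule.dense_iff_topologicalClosure_eq_top.mpr b.dense_span)
    (by rintro _ ⟨i, rfl⟩; exact h i)

end HilbertBasis

namespace WMIdx

theorem ok_vac (i : ℤ) : ok i vac := by
  simp [ok, vac]

def single (i : ℤ) : WMIdx := cons i vac (ok_vac i)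

theorem ok_single_self (i : ℤ) : ok i (single i) := by
  simp [ok, single, cons, vac]

def pair (i : ℤ) : WMIdx := cons i (single i) (ok_single_self i)

theorem pair_injective : Function.Injective pair := by
  intro i j h
  have h' := congrArg Subtype.val h
  simp only [pair, cons, List.cons.injEq] at h'
  exact h'.1

theorem cons_inj_right {i : ℤ} {l m : WMIdx} {hl : ok i l} {hm : ok i m}
    (h : cons i l hl = cons i m hm) : l = m :=
  Subtype.ext (List.cons_injective (congrArg Subtype.val h))

@[elab_as_elim]
theorem induction_on {P : WMIdx → Prop} (l : WMIdx) (vac : P vac)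
    (cons : ∀ i l (h : ok i l), P l → P (cons i l h)) : P l := by
  obtain ⟨l, hl⟩ := l
  induction l with
  | nil => exact vac
  | cons i t ih =>
    have hc := List.isChain_cons.mp hl
    exact cons i ⟨t, hc.2⟩ hc.1 (ih hc.2)

end WMIdx

open WMIdx ContinuousLinearMap

namespace WMFock

variable {H : Type} [NormedAddCommGroup H] [InnerProductSpace ℂ H] [CompleteSpace H]
  (b : HilbertBasis WMIdx ℂ H) (C : ℤ → H →L[ℂ] H)

noncomputable def position (i : ℤ) : H →L[ℂ] H := adjoint (C i) + C i

theorem adjoint_position (i : ℤ) : adjoint (position C i) = position C i := by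
  rw [position, map_add, adjoint_adjoint, add_comm]

/-- `C i` acts on the basis `b` as the weakly monotone creation operator `A_i†`. -/
structure IsCreation : Prop where
  apply_of_ok : ∀ i l (h : ok i l), C i (b l) = b (cons i l h)
  apply_of_not_ok : ∀ i l, ¬ ok i l → C i (b l) = 0

variable {b C}

namespace IsCreation

variable (hC : IsCreation b C)
include hC

theorem adjoint_apply_cons (i : ℤ) (l : WMIdx) (h : ok i l) :
    adjoint (C i) (b (cons i l h)) = b l := by
  classical
  refine b.ext_inner_left fun m => ?_
  rw [adjoint_inner_right]
  by_cases hm : ok i m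
  · rw [hC.apply_of_ok i m hm, orthonormal_iff_ite.mp b.orthonormal,
      orthonormal_iff_ite.mp b.orthonormal]
    exact if_congr ⟨cons_inj_right, fun hml => by subst hml; rfl⟩ rfl rfl
  · rw [hC.apply_of_not_ok i m hm, inner_zero_left, orthonormal_iff_ite.mp b.orthonormal,
      if_neg]
    rintro rfl
    exact hm h

theorem adjoint_apply_of_head?_ne (i : ℤ) (l : WMIdx) (hl : l.1.head? ≠ some i) :
    adjoint (C i) (b l) = 0 := by
  classical
  refine b.ext_inner_left fun m => ?_
  rw [adjoint_inner_right, inner_zero_right]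
  by_cases hm : ok i m
  · rw [hC.apply_of_ok i m hm, orthonormal_iff_ite.mp b.orthonormal, if_neg]
    rintro rfl
    exact hl rfl
  · rw [hC.apply_of_not_ok i m hm, inner_zero_left]

theorem position_apply_of_ok (i : ℤ) (l : WMIdx) (h : ok i l) :
    position C i (b l) = adjoint (C i) (b l) + b (cons i l h) := by
  rw [position, add_apply, hC.apply_of_ok]

theorem position_apply_position_apply_vac (i : ℤ) :
    position C i (position C i (b vac)) = b (pair i) + b vac := by
  rw [position_apply_of_ok hC i vac (ok_vac i),
    adjoint_apply_of_head?_ne hC i vac (by simp [vac]), zero_add]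
  change position C i (b (single i)) = _
  rw [position_apply_of_ok hC i _ (ok_single_self i), add_comm,
    show adjoint (C i) (b (WMIdx.single i)) = b vac from adjoint_apply_cons hC i vac (ok_vac i)]
  rfl

theorem position_apply_of_lt_head {i j : ℤ} {m : WMIdx} (hm : m.1.head? = some j)
    (hij : i < j) : position C i (b m) = 0 := by
  have hadj : adjoint (C i) (b m) = 0 :=
    adjoint_apply_of_head?_ne hC i m (by rw [hm]; simpa using hij.ne')
  have hcre : C i (b m) = 0 :=
    hC.apply_of_not_ok i m fun hok => (hok j (by simp [hm])).not_gt hij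
  rw [position, add_apply, hadj, hcre, add_zero]

variable {T : H →L[ℂ] H} (hT : ∀ i, Commute T (position C i))
include hT

theorem inner_apply_vac_eq_neg_inner_apply_pair {i j : ℤ} {m : WMIdx}
    (hm : m.1.head? = some j) (hij : i < j) :
    ⟪b m, T (b vac)⟫_ℂ = -⟪b m, T (b (pair i))⟫_ℂ := by
  have hcomm := DFunLike.congr_fun ((hT i).mul_right (hT i)).eq (b vac)
  simp only [mul_apply_eq_comp, position_apply_position_apply_vac hC, map_add] at hcomm
  have hkill : ⟪b m, position C i (position C i (T (b vac)))⟫_ℂ = 0 := by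
    rw [← adjoint_inner_left, adjoint_position, ← adjoint_inner_left, adjoint_position,
      position_apply_of_lt_head hC hm hij, map_zero, inner_zero_left]
  rw [← hcomm, inner_add_right] at hkill
  linear_combination hkill

theorem apply_vac_eq_smul : T (b vac) = ⟪b vac, T (b vac)⟫_ℂ • b vac := by
  classical
  refine b.ext_inner_left fun m => ?_
  rw [inner_smul_right, orthonormal_iff_ite.mp b.orthonormal]
  split_ifs with hm
  · rw [hm, mul_one]
  rw [mul_zero]
  obtain ⟨j, hj⟩ : ∃ j, m.1.head? = some j :=
    Option.ne_none_iff_exists'.mp fun h => hm (Subtype.ext (List.head?_eq_none_iff.mp h))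
  -- Bessel's inequality for `T† (b m)` along the orthonormal family `b ∘ pair`
  have hpair : Tendsto (fun i => ⟪b m, T (b (pair i))⟫_ℂ) atBot (𝓝 0) := by
    have := ((b.orthonormal.comp pair pair_injective).tendsto_inner_cofinite_zero
      (adjoint T (b m))).mono_left (Int.cofinite_eq ▸ le_sup_left)
    simpa only [Function.comp_apply, adjoint_inner_left] using this
  have hconst : Tendsto (fun _ : ℤ => ⟪b m, T (b vac)⟫_ℂ) atBot (𝓝 0) := by
    rw [← neg_zero]
    refine hpair.neg.congr' ?_
    filter_upwards [eventually_lt_atBot j] with i hi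
    exact (inner_apply_vac_eq_neg_inner_apply_pair hC hT hj hi).symm
  exact tendsto_nhds_unique tendsto_const_nhds hconst

theorem apply_eq_smul_of_apply_vac {c : ℂ} (hvac : T (b vac) = c • b vac) (l : WMIdx) :
    T (b l) = c • b l := by
  set E := Module.End.eigenspace (T : H →ₗ[ℂ] H) c
  have hE : ∀ v, v ∈ E ↔ T v = c • v := fun v => Module.End.mem_eigenspace_iff
  have hposition : ∀ i v, v ∈ E → position C i v ∈ E := by
    intro i v hv
    rw [hE] at hv ⊢
    rw [← mul_apply_eq_comp, (hT i).eq, mul_apply_eq_comp, hv, map_smul]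
  suffices b l ∈ E ∧ ∀ i, adjoint (C i) (b l) ∈ E from (hE _).mp this.1
  induction l using WMIdx.induction_on with
  | vac =>
    refine ⟨(hE _).mpr hvac, fun i => ?_⟩
    rw [adjoint_apply_of_head?_ne hC i vac (by simp [vac])]
    exact E.zero_mem
  | cons a l h ih =>
    refine ⟨?_, fun i => ?_⟩
    · rw [← add_sub_cancel_left (adjoint (C a) (b l)) (b (cons a l h)),
        ← position_apply_of_ok hC]
      exact E.sub_mem (hposition a _ ih.1) (ih.2 a)
    · obtain rfl | hia := eq_or_ne i a
      · rw [adjoint_apply_cons hC]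
        exact ih.1
      · rw [adjoint_apply_of_head?_ne hC i _ (by simpa [cons] using hia.symm)]
        exact E.zero_mem

theorem eq_smul_one_of_forall_commute : T = ⟪b vac, T (b vac)⟫_ℂ • 1 :=
  b.ext_continuousLinearMap fun l => by
    rw [apply_eq_smul_of_apply_vac hC hT (apply_vac_eq_smul hC hT) l, smul_apply,
      one_apply_eq_self]

end IsCreation

end WMFock

/-- the unital C*-algebra generated by the position operators
`X_i = A_i + A_i†` acts irreducibly: its commutant is `ℂ·I`. -/
theorem wm_selfadjoint_subalgebra_irreducible {H : Type} [NormedAddCommGroup H] [InnerProductSpace ℂ H] [CompleteSpace H]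
    (b : HilbertBasis WMIdx ℂ H) (C : ℤ → H →L[ℂ] H)
    (hC : ∀ i l (h : WMIdx.ok i l), C i (b l) = b (WMIdx.cons i l h))
    (hC0 : ∀ i l, ¬ WMIdx.ok i l → C i (b l) = 0) :
    {T : H →L[ℂ] H | ∀ S ∈ (StarAlgebra.adjoin ℂ
        (Set.range fun i : ℤ =>
          ContinuousLinearMap.adjoint (C i) + C i)).topologicalClosure,
      Commute T S} = Set.range fun c : ℂ => c • (1 : H →L[ℂ] H) := by
  ext T
  constructor
  · intro hT
    have hX : ∀ i, Commute T (WMFock.position C i) := fun i =>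
      hT _ ((StarAlgebra.adjoin ℂ _).le_topologicalClosure
        (StarAlgebra.subset_adjoin ℂ _ ⟨i, rfl⟩))
    exact ⟨_, (WMFock.IsCreation.eq_smul_one_of_forall_commute ⟨hC, hC0⟩ hX).symm⟩
  · rintro ⟨c, rfl⟩ S -
    exact (Commute.one_left S).smul_left c
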